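/- arXiv:1008.5143 — 4 statements merged into one kernel-verified Lean document; each statement's English description precedes it below -/
import Mathlib

section
/- Let n ∈ ℕ, 1 ≤ k ≤ n, and β ∈ [0,1]. Let X be a measurable space, P a probability measure on X, and g : X → [0,1] a measurable function with ∫_X g dP ≤ β. Then ∫_X B_{n,g(x)}({k,…,n}) dP(x) ≤ f_{n,k}(β). -/
/-!
The tail `φ = B_{n,·}({k,…,n})` vanishes at `0` and has derivative `n b_{n-1,k-1}`, a Bernstein
basis polynomial, which increases on `[0, r]` and decreases on `[r, 1]` for `r = (k-1)/(n-1)`; so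
`φ` is convex on `[0, r]` and concave on `[r, 1]`. For such a function and `β ∈ (0, 1]`, some line
of nonnegative slope through `(β, β sup_{[β,1]} φ(q)/q)` lies above `φ` on `[0, 1]`: the line
through the origin when the tangent to `φ` at `β` meets the vertical axis below `0`, the tangent
at `β` otherwise. Integrating this line against the law of `g` gives the bound.
-/

open MeasureTheory

/-- Binomial upper tail `B_{n,p}({k,…,n})`. -/
noncomputable def binTail (n k : ℕ) (p : ℝ) : ℝ :=
  ∑ j ∈ Finset.Icc k n, (n.choose j : ℝ) * p ^ j * (1 - p) ^ (n - j)

/-- `ψ_{n,k}(p) = p⁻¹ B_{n,p}({k,…,n})`, extended continuously at `0`. -/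
noncomputable def psi (n k : ℕ) (p : ℝ) : ℝ :=
  if p = 0 then (if k = 1 then (n : ℝ) else 0) else p⁻¹ * binTail n k p

/-- `f_{n,k}(u) = u ⋅ sup_{p ∈ [u,1]} ψ_{n,k}(p)`. -/
noncomputable def fnk (n k : ℕ) (u : ℝ) : ℝ := u * sSup (psi n k '' Set.Icc u 1)

open Set Polynomial

lemma hasDerivAt_pow_mul_one_sub_pow (a b : ℕ) (p : ℝ) :
    HasDerivAt (fun q : ℝ => q ^ a * (1 - q) ^ b)
      (a * p ^ (a - 1) * (1 - p) ^ b - b * p ^ a * (1 - p) ^ (b - 1)) p := by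
  have h := (hasDerivAt_pow a p).fun_mul (((hasDerivAt_id p).const_sub 1).fun_pow b)
  refine h.congr_deriv ?_
  simp only [id]
  ring

lemma mul_one_sub_mul_deriv_pow_mul_one_sub_pow (a b : ℕ) (p : ℝ) :
    p * (1 - p) * (a * p ^ (a - 1) * (1 - p) ^ b - b * p ^ a * (1 - p) ^ (b - 1)) =
      p ^ a * (1 - p) ^ b * (a - (a + b) * p) := by
  rcases a with _ | a <;> rcases b with _ | b <;> simp [pow_succ] <;> ring

lemma monotoneOn_pow_mul_one_sub_pow (a b : ℕ) :
    MonotoneOn (fun p : ℝ => p ^ a * (1 - p) ^ b) (Icc 0 (a / (a + b))) := by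
  refine monotoneOn_of_hasDerivWithinAt_nonneg (convex_Icc _ _) (by fun_prop)
    (fun x _ => (hasDerivAt_pow_mul_one_sub_pow a b x).hasDerivWithinAt) fun x hx => ?_
  rw [interior_Icc, mem_Ioo] at hx
  obtain ⟨hx0, hxr⟩ := hx
  have hab : 0 < (a : ℝ) + b := by
    by_contra! h
    rw [le_antisymm h (by positivity), div_zero] at hxr
    linarith
  have hx1 : x < 1 := hxr.trans_le ((div_le_one hab).2 (by simp))
  have hsign : 0 ≤ (a : ℝ) - (a + b) * x := by
    rw [lt_div_iff₀ hab] at hxr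
    linarith
  refine nonneg_of_mul_nonneg_right ?_ (mul_pos hx0 (sub_pos.2 hx1))
  rw [mul_one_sub_mul_deriv_pow_mul_one_sub_pow]
  exact mul_nonneg (mul_nonneg (pow_nonneg hx0.le a) (pow_nonneg (sub_pos.2 hx1).le b)) hsign

lemma antitoneOn_pow_mul_one_sub_pow (a b : ℕ) :
    AntitoneOn (fun p : ℝ => p ^ a * (1 - p) ^ b) (Icc (a / (a + b)) 1) := by
  refine antitoneOn_of_hasDerivWithinAt_nonpos (convex_Icc _ _) (by fun_prop)
    (fun x _ => (hasDerivAt_pow_mul_one_sub_pow a b x).hasDerivWithinAt) fun x hx => ?_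
  rw [interior_Icc, mem_Ioo] at hx
  obtain ⟨hrx, hx1⟩ := hx
  have hx0 : 0 < x := lt_of_le_of_lt (by positivity) hrx
  have hsign : (a : ℝ) - (a + b) * x ≤ 0 := by
    rcases (by positivity : (0 : ℝ) ≤ a + b).eq_or_lt with hab | hab
    · rw [← hab, zero_mul, sub_zero]
      linarith [(b.cast_nonneg : (0 : ℝ) ≤ b)]
    · rw [div_lt_iff₀ hab] at hrx
      linarith
  refine nonpos_of_mul_nonpos_right ?_ (mul_pos hx0 (sub_pos.2 hx1))
  rw [mul_one_sub_mul_deriv_pow_mul_one_sub_pow]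
  exact mul_nonpos_of_nonneg_of_nonpos
    (mul_nonneg (pow_nonneg hx0.le a) (pow_nonneg (sub_pos.2 hx1).le b)) hsign

namespace bernsteinPolynomial

lemma eval_eq (m ν : ℕ) (p : ℝ) :
    (bernsteinPolynomial ℝ m ν).eval p = m.choose ν * (p ^ ν * (1 - p) ^ (m - ν)) := by
  simp [bernsteinPolynomial, mul_assoc]

lemma eval_nonneg (m ν : ℕ) {p : ℝ} (hp : p ∈ Icc (0 : ℝ) 1) :
    0 ≤ (bernsteinPolynomial ℝ m ν).eval p := by
  have := sub_nonneg.2 hp.2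
  rw [eval_eq]
  exact mul_nonneg (by positivity) (mul_nonneg (pow_nonneg hp.1 _) (pow_nonneg this _))

lemma monotoneOn_eval {m ν : ℕ} (h : ν ≤ m) :
    MonotoneOn (fun p => (bernsteinPolynomial ℝ m ν).eval p) (Icc 0 (ν / m)) := by
  intro x hx y hy hxy
  have hm : (ν : ℝ) / m = ν / (ν + (m - ν : ℕ)) := by rw [Nat.cast_sub h, add_sub_cancel]
  simp only [eval_eq]
  rw [hm] at hx hy
  exact mul_le_mul_of_nonneg_left (monotoneOn_pow_mul_one_sub_pow _ _ hx hy hxy) (by positivity)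

lemma antitoneOn_eval {m ν : ℕ} (h : ν ≤ m) :
    AntitoneOn (fun p => (bernsteinPolynomial ℝ m ν).eval p) (Icc (ν / m) 1) := by
  intro x hx y hy hxy
  have hm : (ν : ℝ) / m = ν / (ν + (m - ν : ℕ)) := by rw [Nat.cast_sub h, add_sub_cancel]
  simp only [eval_eq]
  rw [hm] at hx hy
  exact mul_le_mul_of_nonneg_left (antitoneOn_pow_mul_one_sub_pow _ _ hx hy hxy) (by positivity)

lemma derivative_sum_Icc (R : Type*) [CommRing R] {κ m : ℕ} (h : κ ≤ m) :
    derivative (∑ ν ∈ Finset.Icc κ m, bernsteinPolynomial R (m + 1) (ν + 1)) =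
      (m + 1) * bernsteinPolynomial R m κ := by
  simp_rw [derivative_sum, derivative_succ_aux, ← Finset.mul_sum,
    ← neg_sub_neg (bernsteinPolynomial R m _)]
  rw [Finset.sum_Icc_sub h (fun ν => -bernsteinPolynomial R m ν),
    eq_zero_of_lt R (Nat.lt_succ_self m)]
  ring

end bernsteinPolynomial

lemma binTail_eq_sum_eval (n k : ℕ) (p : ℝ) :
    binTail n k p = ∑ j ∈ Finset.Icc k n, (bernsteinPolynomial ℝ n j).eval p := by
  simp [binTail, bernsteinPolynomial]

lemma binTail_zero {n k : ℕ} (hk : 1 ≤ k) : binTail n k 0 = 0 :=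
  Finset.sum_eq_zero fun j hj => by simp [zero_pow (by simp at hj; omega : j ≠ 0)]

lemma hasDerivAt_binTail {n k : ℕ} (hk1 : 1 ≤ k) (hkn : k ≤ n) (p : ℝ) :
    HasDerivAt (binTail n k) (n * (bernsteinPolynomial ℝ (n - 1) (k - 1)).eval p) p := by
  obtain ⟨κ, rfl⟩ := Nat.exists_eq_add_of_le' hk1
  obtain ⟨m, rfl⟩ := Nat.exists_eq_add_of_le' (hk1.trans hkn)
  have hsum : binTail (m + 1) (κ + 1) = fun p =>
      (∑ ν ∈ Finset.Icc κ m, bernsteinPolynomial ℝ (m + 1) (ν + 1)).eval p := by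
    ext p
    rw [binTail_eq_sum_eval, ← Finset.map_add_right_Icc, Finset.sum_map, eval_finsetSum]
    rfl
  have := Polynomial.hasDerivAt (∑ ν ∈ Finset.Icc κ m, bernsteinPolynomial ℝ (m + 1) (ν + 1)) p
  rw [bernsteinPolynomial.derivative_sum_Icc ℝ (by omega)] at this
  rw [hsum]
  simpa using this

lemma ConcaveOn.le_add_mul_sub_of_hasDerivAt {s : Set ℝ} {f : ℝ → ℝ} {f' x y : ℝ}
    (hf : ConcaveOn ℝ s f) (hx : x ∈ s) (hy : y ∈ s) (hf' : HasDerivAt f f' x) :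
    f y ≤ f x + f' * (y - x) := by
  rcases lt_trichotomy y x with hyx | rfl | hxy
  · have := hf.le_slope_of_hasDerivAt hy hx hyx hf'
    rw [slope_def_field, le_div_iff₀ (sub_pos.2 hyx)] at this
    linarith
  · simp
  · have := hf.slope_le_of_hasDerivAt hx hy hxy hf'
    rw [slope_def_field, div_le_iff₀ (sub_pos.2 hxy)] at this
    linarith

noncomputable def tangentIntercept (φ φ' : ℝ → ℝ) (p : ℝ) : ℝ := φ p - p * φ' p

section SShaped

variable {φ φ' : ℝ → ℝ} {s : Set ℝ} {r β : ℝ}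

lemma convexOn_of_hasDerivAt_of_monotoneOn (hs : Convex ℝ s) (hφ : ∀ x, HasDerivAt φ (φ' x) x)
    (hmono : MonotoneOn φ' s) : ConvexOn ℝ s φ := by
  have hd : deriv φ = φ' := funext fun x => (hφ x).deriv
  refine MonotoneOn.convexOn_of_deriv hs (fun x _ => (hφ x).continuousAt.continuousWithinAt)
    (fun x _ => (hφ x).differentiableAt.differentiableWithinAt) ?_
  rw [hd]
  exact hmono.mono interior_subset

lemma concaveOn_of_hasDerivAt_of_antitoneOn (hs : Convex ℝ s) (hφ : ∀ x, HasDerivAt φ (φ' x) x)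
    (hanti : AntitoneOn φ' s) : ConcaveOn ℝ s φ := by
  have hd : deriv φ = φ' := funext fun x => (hφ x).deriv
  refine AntitoneOn.concaveOn_of_deriv hs (fun x _ => (hφ x).continuousAt.continuousWithinAt)
    (fun x _ => (hφ x).differentiableAt.differentiableWithinAt) ?_
  rw [hd]
  exact hanti.mono interior_subset

lemma antitoneOn_tangentIntercept (hs : Convex ℝ s) (hs0 : s ⊆ Ici 0)
    (hφ : ∀ x, HasDerivAt φ (φ' x) x) (hmono : MonotoneOn φ' s) :
    AntitoneOn (tangentIntercept φ φ') s := by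
  intro x hx y hy hxy
  rcases hxy.eq_or_lt with rfl | hxy
  · rfl
  have hslope := (convexOn_of_hasDerivAt_of_monotoneOn hs hφ hmono).slope_le_of_hasDerivAt
    hx hy hxy (hφ y)
  rw [slope_def_field, div_le_iff₀ (sub_pos.2 hxy)] at hslope
  have := mul_le_mul_of_nonneg_left (hmono hx hy hxy.le) (hs0 hx)
  simp only [tangentIntercept]
  linarith

lemma monotoneOn_tangentIntercept (hs : Convex ℝ s) (hs0 : s ⊆ Ici 0)
    (hφ : ∀ x, HasDerivAt φ (φ' x) x) (hanti : AntitoneOn φ' s) :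
    MonotoneOn (tangentIntercept φ φ') s := by
  intro x hx y hy hxy
  rcases hxy.eq_or_lt with rfl | hxy
  · rfl
  have hslope := (concaveOn_of_hasDerivAt_of_antitoneOn hs hφ hanti).le_slope_of_hasDerivAt
    hx hy hxy (hφ y)
  rw [slope_def_field, le_div_iff₀ (sub_pos.2 hxy)] at hslope
  have := mul_le_mul_of_nonneg_left (hanti hx hy hxy.le) (hs0 hx)
  simp only [tangentIntercept]
  linarith

lemma hasDerivAt_inv_mul {p : ℝ} (hp : p ≠ 0) (hφ : HasDerivAt φ (φ' p) p) :
    HasDerivAt (fun q => q⁻¹ * φ q) (-tangentIntercept φ φ' p / p ^ 2) p := by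
  refine ((hasDerivAt_inv hp).fun_mul hφ).congr_deriv ?_
  simp only [tangentIntercept]
  field_simp
  ring

lemma monotoneOn_inv_mul (hs : Convex ℝ s) (hs0 : s ⊆ Ioi 0) (hφ : ∀ x, HasDerivAt φ (φ' x) x)
    (hI : ∀ x ∈ s, tangentIntercept φ φ' x ≤ 0) : MonotoneOn (fun q => q⁻¹ * φ q) s :=
  monotoneOn_of_hasDerivWithinAt_nonneg hs
    (fun x hx => (hasDerivAt_inv_mul (hs0 hx).ne' (hφ x)).continuousAt.continuousWithinAt)
    (fun x hx => (hasDerivAt_inv_mul (hs0 (interior_subset hx)).ne' (hφ x)).hasDerivWithinAt)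
    fun x hx => div_nonneg (neg_nonneg.2 (hI x (interior_subset hx))) (sq_nonneg x)

lemma tangentIntercept_nonpos_of_monotoneOn (hφ : ∀ x, HasDerivAt φ (φ' x) x) (hφ0 : φ 0 = 0)
    (hmono : MonotoneOn φ' (Icc 0 r)) {x : ℝ} (hx : x ∈ Icc 0 r) :
    tangentIntercept φ φ' x ≤ 0 := by
  have := antitoneOn_tangentIntercept (convex_Icc 0 r) (fun _ h => h.1) hφ hmono
    ⟨le_rfl, hx.1.trans hx.2⟩ hx hx.1
  simpa [tangentIntercept, hφ0] using this

lemma tangentIntercept_nonpos_of_le_of_nonpos (hφ : ∀ x, HasDerivAt φ (φ' x) x) (hφ0 : φ 0 = 0)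
    (hr : 0 ≤ r) (hmono : MonotoneOn φ' (Icc 0 r)) (hanti : AntitoneOn φ' (Icc r 1))
    (hβ1 : β ≤ 1) (hIβ : tangentIntercept φ φ' β ≤ 0) {x : ℝ} (hx : x ∈ Icc 0 β) :
    tangentIntercept φ φ' x ≤ 0 := by
  rcases le_total x r with hxr | hrx
  · exact tangentIntercept_nonpos_of_monotoneOn hφ hφ0 hmono ⟨hx.1, hxr⟩
  · exact (monotoneOn_tangentIntercept (convex_Icc r 1) (fun _ h => hr.trans h.1) hφ hanti
      ⟨hrx, hx.2.trans hβ1⟩ ⟨hrx.trans hx.2, hβ1⟩ hx.2).trans hIβ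

lemma le_tangent_of_tangentIntercept_nonneg (hφ : ∀ x, HasDerivAt φ (φ' x) x) (hφ0 : φ 0 = 0)
    (hmono : MonotoneOn φ' (Icc 0 r)) (hanti : AntitoneOn φ' (Icc r 1))
    (hrβ : r ≤ β) (hβ1 : β ≤ 1) (hIβ : 0 ≤ tangentIntercept φ φ' β) {p : ℝ}
    (hp : p ∈ Icc (0 : ℝ) 1) : φ p ≤ φ β + φ' β * (p - β) := by
  have hconc := concaveOn_of_hasDerivAt_of_antitoneOn (convex_Icc r 1) hφ hanti
  rcases le_total r p with hrp | hpr
  · exact hconc.le_add_mul_sub_of_hasDerivAt ⟨hrβ, hβ1⟩ ⟨hrp, hp.2⟩ (hφ β)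
  rcases hp.1.eq_or_lt with rfl | hp0
  · simp only [tangentIntercept] at hIβ
    linarith
  have hr0 : 0 < r := hp0.trans_le hpr
  -- on `[0, r]`, `φ` lies below its chord from the origin, and that chord below the tangent at `β`
  have hchord : p⁻¹ * φ p ≤ r⁻¹ * φ r :=
    monotoneOn_inv_mul (convex_Icc p r) (fun x hx => hp0.trans_le hx.1) hφ
      (fun x hx => tangentIntercept_nonpos_of_monotoneOn hφ hφ0 hmono ⟨hp0.le.trans hx.1, hx.2⟩)
      ⟨le_rfl, hpr⟩ ⟨hpr, le_rfl⟩ hpr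
  have htan : φ r ≤ φ β + φ' β * (r - β) :=
    hconc.le_add_mul_sub_of_hasDerivAt ⟨hrβ, hβ1⟩ ⟨le_rfl, hrβ.trans hβ1⟩ (hφ β)
  calc φ p = p * (p⁻¹ * φ p) := by field_simp
    _ ≤ p * (r⁻¹ * (φ β + φ' β * (r - β))) := by
      gcongr ?_ * ?_
      exact hchord.trans (mul_le_mul_of_nonneg_left htan (inv_nonneg.2 hr0.le))
    _ = p / r * tangentIntercept φ φ' β + φ' β * p := by
      simp only [tangentIntercept]; field_simp; ring
    _ ≤ tangentIntercept φ φ' β + φ' β * p := by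
      gcongr; exact mul_le_of_le_one_left hIβ (div_le_one_of_le₀ hpr hr0.le)
    _ = φ β + φ' β * (p - β) := by simp only [tangentIntercept]; ring

theorem exists_affine_majorant (hφ : ∀ x, HasDerivAt φ (φ' x) x) (hφ0 : φ 0 = 0)
    (hφ' : ∀ x ∈ Icc (0 : ℝ) 1, 0 ≤ φ' x) (hr : 0 ≤ r)
    (hmono : MonotoneOn φ' (Icc 0 r)) (hanti : AntitoneOn φ' (Icc r 1))
    (hβ0 : 0 < β) (hβ1 : β ≤ 1) :
    ∃ c, 0 ≤ c ∧ ∀ p ∈ Icc (0 : ℝ) 1,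
      φ p ≤ β * sSup ((fun q => q⁻¹ * φ q) '' Icc β 1) + c * (p - β) := by
  set ψ : ℝ → ℝ := fun q => q⁻¹ * φ q
  set S := sSup (ψ '' Icc β 1)
  have hbdd : BddAbove (ψ '' Icc β 1) := (isCompact_Icc.image_of_continuousOn fun x hx =>
    (hasDerivAt_inv_mul (hβ0.trans_le hx.1).ne' (hφ x)).continuousAt.continuousWithinAt).bddAbove
  have hle_S : ∀ p ∈ Icc β 1, ψ p ≤ S := fun p hp => le_csSup hbdd (mem_image_of_mem ψ hp)
  rcases le_or_gt (tangentIntercept φ φ' β) 0 with hIβ | hIβ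
  · refine ⟨S, ?_, fun p hp => ?_⟩
    · have hmono_φ : MonotoneOn φ (Icc 0 1) := monotoneOn_of_hasDerivWithinAt_nonneg
        (convex_Icc 0 1) (fun x _ => (hφ x).continuousAt.continuousWithinAt)
        (fun x _ => (hφ x).hasDerivWithinAt) fun x hx => hφ' x (interior_subset hx)
      have := hmono_φ ⟨le_rfl, zero_le_one⟩ ⟨hβ0.le, hβ1⟩ hβ0.le
      rw [hφ0] at this
      exact (mul_nonneg (inv_nonneg.2 hβ0.le) this).trans (hle_S β ⟨le_rfl, hβ1⟩)
    suffices φ p ≤ p * S by linarith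
    rcases hp.1.eq_or_lt with rfl | hp0
    · simp [hφ0]
    have hψp : ψ p ≤ S := by
      rcases le_total β p with hβp | hpβ
      · exact hle_S p ⟨hβp, hp.2⟩
      refine le_trans ?_ (hle_S β ⟨le_rfl, hβ1⟩)
      exact monotoneOn_inv_mul (convex_Icc p β) (fun x hx => hp0.trans_le hx.1) hφ
        (fun x hx => tangentIntercept_nonpos_of_le_of_nonpos hφ hφ0 hr hmono hanti hβ1 hIβ
          ⟨hp0.le.trans hx.1, hx.2⟩) ⟨le_rfl, hpβ⟩ ⟨hpβ, le_rfl⟩ hpβ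
    calc φ p = p * ψ p := by simp [ψ, hp0.ne']
      _ ≤ p * S := mul_le_mul_of_nonneg_left hψp hp0.le
  · have hrβ : r ≤ β := le_of_not_ge fun hβr =>
      hIβ.not_ge (tangentIntercept_nonpos_of_monotoneOn hφ hφ0 hmono ⟨hβ0.le, hβr⟩)
    have hβS : φ β ≤ β * S := by
      have := hle_S β ⟨le_rfl, hβ1⟩
      rwa [inv_mul_le_iff₀ hβ0] at this
    refine ⟨φ' β, hφ' β ⟨hβ0.le, hβ1⟩, fun p hp => ?_⟩
    linarith [le_tangent_of_tangentIntercept_nonneg hφ hφ0 hmono hanti hrβ hβ1 hIβ.le hp]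

end SShaped

lemma integral_comp_le_of_le_affine {X : Type*} [MeasurableSpace X] {P : Measure X}
    [IsProbabilityMeasure P] {φ : ℝ → ℝ} (hφ : Continuous φ) {g : X → ℝ} (hg : Measurable g)
    (hg01 : ∀ x, g x ∈ Icc (0 : ℝ) 1) {a c β : ℝ} (hc : 0 ≤ c)
    (hline : ∀ p ∈ Icc (0 : ℝ) 1, φ p ≤ a + c * (p - β)) (hmean : ∫ x, g x ∂P ≤ β) :
    ∫ x, φ (g x) ∂P ≤ a := by
  have hgint : Integrable g P := .of_mem_Icc 0 1 hg.aemeasurable (ae_of_all _ hg01)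
  obtain ⟨C, hC⟩ := isCompact_Icc.exists_bound_of_continuousOn hφ.continuousOn
  have hφg : Integrable (fun x => φ (g x)) P := .of_bound
    (hφ.measurable.comp hg).aestronglyMeasurable C (ae_of_all _ fun x => hC _ (hg01 x))
  have hslope : Integrable (fun x => c * (g x - β)) P :=
    (hgint.sub (integrable_const β)).const_mul c
  calc ∫ x, φ (g x) ∂P ≤ ∫ x, (a + c * (g x - β)) ∂P :=
        integral_mono hφg ((integrable_const a).add hslope) fun x => hline _ (hg01 x)
    _ = a + c * (∫ x, g x ∂P - β) := by
      rw [integral_add (integrable_const a) hslope, integral_const_mul,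
        integral_sub hgint (integrable_const β)]
      simp
    _ ≤ a := by nlinarith

/-- If `g : X → [0,1]` is measurable with `∫ g dP ≤ β`, then
`∫ B_{n,g(x)}({k,…,n}) dP(x) ≤ f_{n,k}(β)`. -/
theorem integral_binTail_le_fnk (n k : ℕ) (hk1 : 1 ≤ k) (hkn : k ≤ n)
    (β : ℝ) (hβ : β ∈ Set.Icc (0:ℝ) 1)
    {X : Type*} [MeasurableSpace X] (P : Measure X) [IsProbabilityMeasure P]
    (g : X → ℝ) (hg : Measurable g) (hg01 : ∀ x, g x ∈ Set.Icc (0:ℝ) 1)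
    (hmean : (∫ x, g x ∂P) ≤ β) :
    ∫ x, binTail n k (g x) ∂P ≤ fnk n k β := by
  rcases hβ.1.eq_or_lt with rfl | hβ0
  · have hg0 : g =ᵐ[P] 0 := (integral_eq_zero_iff_of_nonneg (fun x => (hg01 x).1)
      (.of_mem_Icc 0 1 hg.aemeasurable (ae_of_all _ hg01))).1
      (le_antisymm hmean (integral_nonneg fun x => (hg01 x).1))
    rw [fnk, zero_mul]
    exact (integral_eq_zero_of_ae (hg0.mono fun x hx => by simp [hx, binTail_zero hk1])).le
  have hφ := hasDerivAt_binTail hk1 hkn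
  have hν : k - 1 ≤ n - 1 := by omega
  obtain ⟨c, hc, hline⟩ := exists_affine_majorant hφ (binTail_zero hk1)
    (fun p hp => mul_nonneg n.cast_nonneg (bernsteinPolynomial.eval_nonneg _ _ hp))
    (by positivity)
    (fun x hx y hy hxy => mul_le_mul_of_nonneg_left
      (bernsteinPolynomial.monotoneOn_eval hν hx hy hxy) n.cast_nonneg)
    (fun x hx y hy hxy => mul_le_mul_of_nonneg_left
      (bernsteinPolynomial.antitoneOn_eval hν hx hy hxy) n.cast_nonneg) hβ0 hβ.2
  have hpsi : psi n k '' Icc β 1 = (fun q => q⁻¹ * binTail n k q) '' Icc β 1 :=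
    image_congr fun q hq => if_neg (hβ0.trans_le hq.1).ne'
  rw [fnk, hpsi]
  exact integral_comp_le_of_le_affine (continuous_iff_continuousAt.2 fun p => (hφ p).continuousAt)
    hg hg01 hc hline hmean
end

section
/- Let n ∈ ℕ, 1 ≤ k ≤ n, let Q be a Borel probability measure on [0,1] and let β ∈ [0,1]. Then the n-fold product measure Q^{⊗n} on [0,1]^n satisfies Q^{⊗n}({u ∈ [0,1]^n : U_{k:n}(u) ≤ β}) = B_{n, Q([0,β])}({k,…,n}), and likewise Q^{⊗n}({u ∈ [0,1]^n : U_{k:n}(u) < β}) = B_{n, Q([0,β))}({k,…,n}). -/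
/-!
A lower set `s` contains the `k`-th order statistic of `u` exactly when at least `k` of the
coordinates of `u` lie in `s`: in the sorted list of the coordinates, the members of `s` form an
initial segment. Under an i.i.d. product the number of coordinates in `s` is binomial with
parameter `μ s`, which gives the distribution function at `s = (-∞, β]` and `s = (-∞, β)`.
Since `Q` is concentrated on `[0, 1]`, these half-lines have the same mass as `[0, β]` and
`[0, β)`.
-/

open MeasureTheory

/-- The `k`-th order statistic (k-th smallest coordinate) of `u : Fin n → α`,
with default value `d` (irrelevant for `1 ≤ k ≤ n`). -/
noncomputable def orderStat {α : Type*} [LinearOrder α] {n : ℕ} (k : ℕ) (u : Fin n → α)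
    (d : α) : α :=
  ((Multiset.map u Finset.univ.val).sort (· ≤ ·)).getD (k - 1) d

open Finset

theorem List.Pairwise.getElem_mem_iff_lt_countP {α : Type*} [Preorder α] {s : Set α}
    [DecidablePred (· ∈ s)] (hs : IsLowerSet s) {l : List α} (hl : l.Pairwise (· ≤ ·))
    {i : ℕ} (hi : i < l.length) : l[i] ∈ s ↔ i < l.countP (· ∈ s) := by
  induction l generalizing i with
  | nil => simp at hi
  | cons a l ih =>
    rw [List.pairwise_cons] at hl
    by_cases ha : a ∈ s
    · cases i with
      | zero => simp [ha]
      | succ i => simp [ha, ih hl.2 (by simpa using hi)]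
    · have hnone : ∀ x ∈ l, x ∉ s := fun x hx hxs => ha (hs (hl.1 x hx) hxs)
      have hzero : l.countP (· ∈ s) = 0 := List.countP_eq_zero.2 (by simpa using hnone)
      cases i with
      | zero => simp [ha, hzero]
      | succ i => simp [ha, hzero, hnone _ (List.getElem_mem _)]

theorem orderStat_mem_iff {α : Type*} [LinearOrder α] {n k : ℕ} (hk1 : 1 ≤ k) (hkn : k ≤ n)
    (u : Fin n → α) (d : α) {s : Set α} [DecidablePred (· ∈ s)] (hs : IsLowerSet s) :
    orderStat k u d ∈ s ↔ k ≤ #{i | u i ∈ s} := by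
  unfold orderStat
  set l := (Multiset.map u univ.val).sort (· ≤ ·)
  have hlen : l.length = n := by simp [l]
  have hcount : l.countP (· ∈ s) = #{i | u i ∈ s} := by
    rw [← Multiset.coe_countP, Multiset.sort_eq, Multiset.countP_map, Finset.card,
      Finset.filter_val]
  rw [List.getD_eq_getElem _ _ (by omega),
    (Multiset.pairwise_sort _ _).getElem_mem_iff_lt_countP hs, hcount]
  omega

section CountInSet

variable {ι α : Type*} [Fintype ι] [DecidableEq ι] {s : Set α} [DecidablePred (· ∈ s)]

theorem setOf_filter_mem_eq (S : Finset ι) :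
    {u : ι → α | ({i | u i ∈ s} : Finset ι) = S} =
      Set.univ.pi fun i => if i ∈ S then s else sᶜ := by
  ext u
  simp only [Set.mem_ofPred_eq, Set.mem_univ_pi, Finset.ext_iff, mem_filter, mem_univ, true_and]
  refine forall_congr' fun i => ?_
  by_cases hi : i ∈ S <;> simp [hi]

variable [MeasurableSpace α]

theorem measurableSet_setOf_filter_mem_eq (hs : MeasurableSet s) (S : Finset ι) :
    MeasurableSet {u : ι → α | ({i | u i ∈ s} : Finset ι) = S} := by
  rw [setOf_filter_mem_eq]
  exact .univ_pi fun i => by split_ifs <;> simp [hs]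

variable (μ : Measure α) [IsProbabilityMeasure μ]

theorem measure_pi_setOf_filter_mem_eq (hs : MeasurableSet s) (S : Finset ι) :
    Measure.pi (fun _ : ι => μ) {u | ({i | u i ∈ s} : Finset ι) = S}
      = μ s ^ #S * (1 - μ s) ^ (Fintype.card ι - #S) := by
  rw [setOf_filter_mem_eq, Measure.pi_pi, ← prob_compl_eq_one_sub hs, ← card_compl]
  simp only [apply_ite μ, prod_ite, filter_mem_eq_inter, univ_inter, prod_const]
  rw [filter_notMem_eq_sdiff, compl_eq_univ_sdiff]

theorem measure_pi_setOf_le_card_filter_mem (hs : MeasurableSet s) (k : ℕ) :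
    Measure.pi (fun _ : ι => μ) {u | k ≤ #{i | u i ∈ s}}
      = ∑ j ∈ Icc k (Fintype.card ι), ((Fintype.card ι).choose j : ENNReal) *
          μ s ^ j * (1 - μ s) ^ (Fintype.card ι - j) := by
  let f : (ι → α) → Finset ι := fun u => {i | u i ∈ s}
  have hevent :
      {u | k ≤ #(f u)} = f ⁻¹' ↑({S ∈ univ.powerset | k ≤ #S} : Finset (Finset ι)) := by
    ext u; simp
  have hIcc : Icc k (Fintype.card ι) = {j ∈ range (Fintype.card ι + 1) | k ≤ j} := by
    ext j; simp only [mem_Icc, mem_filter, mem_range]; omega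
  rw [hevent, ← sum_measure_preimage_singleton _
    fun S _ => measurableSet_setOf_filter_mem_eq hs S, sum_filter]
  simp only [Set.preimage, Set.mem_singleton_iff, measure_pi_setOf_filter_mem_eq μ hs]
  -- grouping the fibres by the cardinality of `S` produces the binomial coefficients
  rw [sum_powerset_apply_card
    (fun j => if k ≤ j then μ s ^ j * (1 - μ s) ^ (Fintype.card ι - j) else 0),
    hIcc, sum_filter, card_univ]
  simp [mul_assoc, nsmul_eq_mul]

end CountInSet

theorem ofReal_binTail_toReal {p : ENNReal} (hp : p ≤ 1) (n k : ℕ) :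
    ENNReal.ofReal (binTail n k p.toReal)
      = ∑ j ∈ Icc k n, (n.choose j : ENNReal) * p ^ j * (1 - p) ^ (n - j) := by
  have hp_top : p ≠ ⊤ := ne_top_of_le_ne_top ENNReal.one_ne_top hp
  rw [← ENNReal.ofReal_toReal (a := ∑ j ∈ Icc k n, _)
      (ENNReal.sum_ne_top.2 fun j _ => by finiteness),
    binTail, ENNReal.toReal_sum (fun j _ => by finiteness)]
  simp [ENNReal.toReal_sub_of_le hp ENNReal.one_ne_top]

theorem measure_pi_setOf_orderStat_mem {α : Type*} [LinearOrder α] [MeasurableSpace α]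
    (μ : Measure α) [IsProbabilityMeasure μ] {n k : ℕ} (hk1 : 1 ≤ k) (hkn : k ≤ n) (d : α)
    {s : Set α} (hs : IsLowerSet s) (hms : MeasurableSet s) :
    Measure.pi (fun _ : Fin n => μ) {u | orderStat k u d ∈ s}
      = ENNReal.ofReal (binTail n k (μ s).toReal) := by
  classical
  simp_rw [orderStat_mem_iff hk1 hkn _ d hs]
  rw [measure_pi_setOf_le_card_filter_mem μ hms, ofReal_binTail_toReal prob_le_one,
    Fintype.card_fin]

theorem orderStat_cdf_general (n k : ℕ) (hk1 : 1 ≤ k) (hkn : k ≤ n)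
    (Q : Measure ℝ) [IsProbabilityMeasure Q] (hQ : Q (Set.Icc 0 1) = 1)
    (β : ℝ) :
    (Measure.pi fun _ : Fin n => Q) {u : Fin n → ℝ | orderStat k u 0 ≤ β}
      = ENNReal.ofReal (binTail n k (Q (Set.Icc 0 β)).toReal) ∧
    (Measure.pi fun _ : Fin n => Q) {u : Fin n → ℝ | orderStat k u 0 < β}
      = ENNReal.ofReal (binTail n k (Q (Set.Ico 0 β)).toReal) := by
  have hneg : Q (Set.Iio 0) = 0 :=
    measure_mono_null (fun x (hx : x < 0) (hmem : x ∈ Set.Icc 0 1) => hx.not_ge hmem.1)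
      ((prob_compl_eq_zero_iff measurableSet_Icc).2 hQ)
  rw [← Set.Iic_sdiff_Iio, ← Set.Iio_sdiff_Iio, measure_sdiff_null hneg,
    measure_sdiff_null hneg]
  exact ⟨measure_pi_setOf_orderStat_mem Q hk1 hkn 0 (isLowerSet_Iic β) measurableSet_Iic,
    measure_pi_setOf_orderStat_mem Q hk1 hkn 0 (isLowerSet_Iio β) measurableSet_Iio⟩

/-- Distribution function of order statistics under an i.i.d. product:
`Q^{⊗n}(U_{k:n} ≤ β) = B_{n, Q([0,β])}({k,…,n})` and
`Q^{⊗n}(U_{k:n} < β) = B_{n, Q([0,β))}({k,…,n})`. -/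
theorem orderStat_cdf (n k : ℕ) (hk1 : 1 ≤ k) (hkn : k ≤ n)
    (Q : Measure ℝ) [IsProbabilityMeasure Q] (hQ : Q (Set.Icc 0 1) = 1)
    (β : ℝ) (hβ : β ∈ Set.Icc (0:ℝ) 1) :
    (Measure.pi fun _ : Fin n => Q) {u : Fin n → ℝ | orderStat k u 0 ≤ β}
      = ENNReal.ofReal (binTail n k (Q (Set.Icc 0 β)).toReal) ∧
    (Measure.pi fun _ : Fin n => Q) {u : Fin n → ℝ | orderStat k u 0 < β}
      = ENNReal.ofReal (binTail n k (Q (Set.Ico 0 β)).toReal) :=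
  orderStat_cdf_general n k hk1 hkn Q hQ β
end

section
/- Let t ∈ [0,1], let P be the uniform distribution on [0,1], and define K(x,·) := t δ_{xt} + (1-t) U_{[t,1]} for x ∈ [0,1], where U_{[t,1]} denotes the uniform distribution on [t,1] (interpreted as δ_1 if t = 1). Then K is a Markov kernel from [0,1] to [0,1], and for every α ∈ [0,1] one has K(x,[0,α]) = t·1{xt ≤ α} + max(α - t, 0) for all x ∈ [0,1], and ∫_0^1 K(x,[0,α]) dx = α; in particular K is a P-kernel for P. -/
/-!
The mass `K(x,[0,α])` splits into the atom `t·1{xt ≤ α}` and the uniform part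
`(1-t)·U_{[t,1]}[0,α] = (α-t)⁺`. Integrated over `x ∈ [0,1]`, the atom contributes
`t·λ{x ∈ [0,1] : xt ≤ α} = min(t, α)`, and `min(t, α) + (α-t)⁺ = α`.
-/

open MeasureTheory

/-- The uniform distribution on `[a,b]` (interpreted as `δ_b` when `a ≥ b`). -/
noncomputable def unif (a b : ℝ) : Measure ℝ :=
  if a < b then (ENNReal.ofReal (b - a))⁻¹ • volume.restrict (Set.Icc a b)
  else Measure.dirac b

noncomputable def Kt (t : ℝ) (x : ℝ) : Measure ℝ :=
  ENNReal.ofReal t • Measure.dirac (x * t) + ENNReal.ofReal (1 - t) • unif t 1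

open Set ENNReal

instance isProbabilityMeasure_unif (a b : ℝ) : IsProbabilityMeasure (unif a b) := by
  rw [unif]
  split_ifs with hab
  · constructor
    rw [Measure.smul_apply, Measure.restrict_apply_univ, Real.volume_Icc, smul_eq_mul,
      ENNReal.inv_mul_cancel (by simpa using hab) ofReal_ne_top]
  · infer_instance

lemma ofReal_sub_mul_unif_Icc {a b c d : ℝ} (hab : a ≤ b) (hca : c ≤ a) (hdb : d ≤ b) :
    ENNReal.ofReal (b - a) * unif a b (Icc c d) = ENNReal.ofReal (d - a) := by
  rcases hab.lt_or_eq with hab | rfl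
  · rw [unif, if_pos hab, Measure.smul_apply, Measure.restrict_apply measurableSet_Icc,
      Icc_inter_Icc, max_eq_right hca, min_eq_left hdb, Real.volume_Icc, smul_eq_mul,
      ← mul_assoc, ENNReal.mul_inv_cancel (by simpa using hab) ofReal_ne_top, one_mul]
  · simp [ofReal_eq_zero.2 (sub_nonpos.2 hdb)]

lemma measurable_Kt (t : ℝ) : Measurable (Kt t) := by
  refine Measurable.add_const ?_ _
  refine Measure.measurable_of_measurable_coe _ fun s hs => ?_
  simp only [Measure.smul_apply, smul_eq_mul]
  exact ((Measure.measurable_coe hs).comp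
    (Measure.measurable_dirac.comp (measurable_mul_const t))).const_mul _

lemma isProbabilityMeasure_Kt {t : ℝ} (ht0 : 0 ≤ t) (ht1 : t ≤ 1) (x : ℝ) :
    IsProbabilityMeasure (Kt t x) := by
  constructor
  simp [Kt, ← ENNReal.ofReal_add ht0 (sub_nonneg.2 ht1)]

lemma Kt_apply_Icc {t x α : ℝ} (ht0 : 0 ≤ t) (ht1 : t ≤ 1) (hα : α ≤ 1) (hx : 0 ≤ x) :
    Kt t x (Icc 0 α) = {y | y * t ≤ α}.indicator (fun _ => ENNReal.ofReal t) x
      + ENNReal.ofReal (α - t) := by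
  rw [Kt, Measure.add_apply, Measure.smul_apply, Measure.smul_apply, smul_eq_mul, smul_eq_mul,
    ofReal_sub_mul_unif_Icc ht1 ht0 hα, Measure.dirac_apply' _ measurableSet_Icc]
  by_cases h : x * t ≤ α
  · simp [h, mul_nonneg hx ht0]
  · simp [h]

lemma Kt_apply_Icc_eq_ofReal {t x α : ℝ} (ht0 : 0 ≤ t) (ht1 : t ≤ 1) (hα : α ≤ 1)
    (hx : 0 ≤ x) :
    Kt t x (Icc 0 α) = ENNReal.ofReal (t * (if x * t ≤ α then 1 else 0) + max (α - t) 0) := by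
  rw [Kt_apply_Icc ht0 ht1 hα hx, ofReal_add (by positivity) (le_max_right _ _), ofReal_max,
    ofReal_zero, max_eq_left zero_le]
  by_cases h : x * t ≤ α <;> simp [h]

lemma ofReal_mul_volume_setOf_mul_le_inter_Icc {t α : ℝ} (ht : 0 ≤ t) (hα : 0 ≤ α) :
    ENNReal.ofReal t * volume ({y | y * t ≤ α} ∩ Icc 0 1) = ENNReal.ofReal (min t α) := by
  rcases le_or_gt t α with htα | hαt
  · have : {y | y * t ≤ α} ∩ Icc 0 1 = Icc 0 1 :=
      inter_eq_right.2 fun y hy => (mul_le_of_le_one_left ht hy.2).trans htα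
    simp [this, htα]
  · have ht' : 0 < t := hα.trans_lt hαt
    have : {y | y * t ≤ α} ∩ Icc 0 1 = Icc 0 (α / t) := by
      ext y
      simp only [mem_inter_iff, mem_ofPred_eq, mem_Icc, ← le_div_iff₀ ht']
      constructor
      · rintro ⟨h, h0, -⟩; exact ⟨h0, h⟩
      · rintro ⟨h0, h⟩; exact ⟨h, h0, h.trans ((div_le_one ht').2 hαt.le)⟩
    rw [this, Real.volume_Icc, sub_zero, ← ofReal_mul ht, mul_div_cancel₀ _ ht'.ne',
      min_eq_right hαt.le]

lemma setLIntegral_Kt_apply_Icc {t α : ℝ} (ht0 : 0 ≤ t) (ht1 : t ≤ 1) (hα0 : 0 ≤ α)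
    (hα1 : α ≤ 1) :
    ∫⁻ x in Icc 0 1, Kt t x (Icc 0 α) = ENNReal.ofReal α := by
  have hmeas : MeasurableSet {y : ℝ | y * t ≤ α} :=
    measurableSet_le (measurable_mul_const t) measurable_const
  calc ∫⁻ x in Icc 0 1, Kt t x (Icc 0 α)
      = ∫⁻ x in Icc 0 1, {y | y * t ≤ α}.indicator (fun _ => ENNReal.ofReal t) x
          + ENNReal.ofReal (α - t) :=
        setLIntegral_congr_fun measurableSet_Icc fun x hx => Kt_apply_Icc ht0 ht1 hα1 hx.1
    _ = ENNReal.ofReal t * volume ({y | y * t ≤ α} ∩ Icc 0 1) + ENNReal.ofReal (α - t) := by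
        rw [lintegral_add_right _ measurable_const, lintegral_indicator_const hmeas,
          Measure.restrict_apply hmeas, setLIntegral_const, Real.volume_Icc]
        simp
    _ = ENNReal.ofReal (min t α) + ENNReal.ofReal (α - t) := by
        rw [ofReal_mul_volume_setOf_mul_le_inter_Icc ht0 hα0]
    _ = ENNReal.ofReal α := by
        rcases le_total t α with h | h
        · rw [min_eq_left h, ← ofReal_add ht0 (sub_nonneg.2 h), add_sub_cancel]
        · rw [min_eq_right h, ofReal_eq_zero.2 (sub_nonpos.2 h), add_zero]

/-- `K(x,·) = t δ_{xt} + (1-t) U_{[t,1]}` is a Markov kernel from `[0,1]` to `[0,1]` with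
`K(x,[0,α]) = t·1{xt ≤ α} + max(α-t,0)` and `∫₀¹ K(x,[0,α]) dx = α`; in particular `K` is a
P-kernel for the uniform distribution `P` on `[0,1]`. -/
theorem Kt_is_pkernel (t : ℝ) (ht : t ∈ Set.Icc (0:ℝ) 1) :
    Measurable (fun x : ℝ => Kt t x) ∧
    (∀ x ∈ Set.Icc (0:ℝ) 1, IsProbabilityMeasure (Kt t x) ∧ Kt t x (Set.Icc 0 1) = 1) ∧
    (∀ α ∈ Set.Icc (0:ℝ) 1, ∀ x ∈ Set.Icc (0:ℝ) 1,
      Kt t x (Set.Icc 0 α)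
        = ENNReal.ofReal (t * (if x * t ≤ α then 1 else 0) + max (α - t) 0)) ∧
    (∀ α ∈ Set.Icc (0:ℝ) 1,
      ∫⁻ x, Kt t x (Set.Icc 0 α) ∂(volume.restrict (Set.Icc 0 1)) = ENNReal.ofReal α) ∧
    (∀ α ∈ Set.Icc (0:ℝ) 1,
      ∫⁻ x, Kt t x (Set.Icc 0 α) ∂(volume.restrict (Set.Icc 0 1)) ≤ ENNReal.ofReal α) := by
  obtain ⟨ht0, ht1⟩ := ht
  refine ⟨measurable_Kt t, fun x hx => ⟨isProbabilityMeasure_Kt ht0 ht1 x, ?_⟩,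
    fun α hα x hx => Kt_apply_Icc_eq_ofReal ht0 ht1 hα.2 hx.1,
    fun α hα => setLIntegral_Kt_apply_Icc ht0 ht1 hα.1 hα.2,
    fun α hα => (setLIntegral_Kt_apply_Icc ht0 ht1 hα.1 hα.2).le⟩
  rw [Kt_apply_Icc ht0 ht1 le_rfl hx.1,
    indicator_of_mem (s := {y | y * t ≤ 1}) (mul_le_one₀ hx.2 ht0 ht1),
    ← ofReal_add ht0 (sub_nonneg.2 ht1), add_sub_cancel, ofReal_one]
end

section
/- Let t ∈ (0,1], let P be the uniform distribution on [0,1], and define K(x,·) := t δ_{xt} + (1-t) U_{[t,1]} for x ∈ [0,1], where U_{[t,1]} denotes the uniform distribution on [t,1] (interpreted as δ_1 if t = 1). Then for every α ∈ [0,1], the pushforward under P of the map x ↦ K(x,[0,α]) equals the pushforward under P of the map x ↦ K(x,[0,α)), and both equal the two-point measure (1 - min(α/t, 1)) δ_{max(α-t,0)} + min(α/t, 1) δ_{t + max(α-t,0)} on [0,1]. -/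
/-!
For `x ∈ [0,1]` we have `K(x,[0,α]) = t·1{xt ≤ α} + (1-t)·U_{[t,1]}([0,α])`, and the second
term equals `(α-t)⁺` whether or not the endpoint `α` is included. Hence `x ↦ K(x,[0,α])` and
`x ↦ K(x,[0,α))` agree, up to the null set `{α/t}`, with the step function equal to
`t + (α-t)⁺` on `[0, α/t]` and to `(α-t)⁺` beyond. A step function pushes the uniform law on
`[0,1]` forward to the two-point law whose weights are the lengths of the two pieces.
-/

open MeasureTheory

open Set

theorem MeasureTheory.Measure.map_ite_const {α β : Type*} [MeasurableSpace α] [MeasurableSpace β]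
    (μ : Measure α) {s : Set α} [DecidablePred (· ∈ s)] (hs : MeasurableSet s) (c d : β) :
    μ.map (fun x => if x ∈ s then c else d) = μ s • Measure.dirac c + μ sᶜ • Measure.dirac d := by
  have hf : Measurable fun x => if x ∈ s then c else d :=
    Measurable.ite hs measurable_const measurable_const
  have hc : (fun x => if x ∈ s then c else d) =ᵐ[μ.restrict s] fun _ => c := by
    filter_upwards [ae_restrict_mem hs] with x hx using if_pos hx
  have hd : (fun x => if x ∈ s then c else d) =ᵐ[μ.restrict sᶜ] fun _ => d := by
    filter_upwards [ae_restrict_mem hs.compl] with x hx using if_neg hx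
  conv_lhs => rw [← μ.restrict_add_restrict_compl hs]
  rw [Measure.map_add _ _ hf, Measure.map_congr hc, Measure.map_congr hd, Measure.map_const,
    Measure.map_const, Measure.restrict_apply_univ, Measure.restrict_apply_univ]

theorem ofReal_sub_mul_unif_apply (a b : ℝ) (S : Set ℝ) :
    ENNReal.ofReal (b - a) * unif a b S = volume (S ∩ Icc a b) := by
  rw [unif]
  split_ifs with hab
  · rw [Measure.smul_apply, smul_eq_mul, Measure.restrict_apply' measurableSet_Icc, ← mul_assoc,
      ENNReal.mul_inv_cancel (by simpa using hab) ENNReal.ofReal_ne_top, one_mul]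
  · rw [ENNReal.ofReal_of_nonpos (by linarith), zero_mul, eq_comm]
    exact measure_mono_null (inter_subset_right.trans (Icc_subset_Icc_right (not_lt.1 hab)))
      (by rw [Icc_self]; exact measure_singleton a)

theorem Kt_apply (t x : ℝ) (S : Set ℝ) :
    Kt t x S = ENNReal.ofReal t * S.indicator 1 (x * t) + volume (S ∩ Icc t 1) := by
  rw [Kt, Measure.add_apply, Measure.smul_apply, Measure.smul_apply, smul_eq_mul, smul_eq_mul,
    Measure.dirac_apply, ofReal_sub_mul_unif_apply]

theorem volume_inter_Icc_of_Ico_subset_of_subset_Icc {t α : ℝ} (ht : 0 ≤ t) (hα : α ≤ 1)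
    {S : Set ℝ} (hS₁ : Ico 0 α ⊆ S) (hS₂ : S ⊆ Icc 0 α) :
    volume (S ∩ Icc t 1) = ENNReal.ofReal (α - t) := by
  refine le_antisymm ?_ ?_
  · calc volume (S ∩ Icc t 1) ≤ volume (Icc t α) :=
          measure_mono fun x hx => ⟨hx.2.1, (hS₂ hx.1).2⟩
      _ = ENNReal.ofReal (α - t) := Real.volume_Icc
  · calc ENNReal.ofReal (α - t) = volume (Ico t α) := Real.volume_Ico.symm
      _ ≤ volume (S ∩ Icc t 1) :=
          measure_mono fun x hx => ⟨hS₁ ⟨ht.trans hx.1, hx.2⟩, hx.1, hx.2.le.trans hα⟩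

theorem Kt_toReal_ae_eq {t α : ℝ} (ht : t ∈ Ioc 0 1) (hα : α ∈ Icc 0 1)
    {S : Set ℝ} (hS₁ : Ico 0 α ⊆ S) (hS₂ : S ⊆ Icc 0 α) :
    (fun x => (Kt t x S).toReal) =ᵐ[volume.restrict (Icc 0 1)]
      fun x => if x ∈ Iic (α / t) then t + max (α - t) 0 else max (α - t) 0 := by
  have hvol := volume_inter_Icc_of_Ico_subset_of_subset_Icc ht.1.le hα.2 hS₁ hS₂
  filter_upwards [ae_restrict_mem measurableSet_Icc, (volume.restrict (Icc (0:ℝ) 1)).ae_ne (α / t)]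
    with x hx hxα
  rw [Kt_apply, hvol]
  split_ifs with hle
  · have hxS : x * t ∈ S :=
      hS₁ ⟨mul_nonneg hx.1 ht.1.le, (lt_div_iff₀ ht.1).1 (lt_of_le_of_ne hle hxα)⟩
    rw [indicator_of_mem hxS, Pi.one_apply, mul_one, ENNReal.toReal_add ENNReal.ofReal_ne_top
      ENNReal.ofReal_ne_top, ENNReal.toReal_ofReal ht.1.le, ENNReal.toReal_ofReal']
  · have hxS : x * t ∉ S := fun h => hle ((le_div_iff₀ ht.1).2 (hS₂ h).2)
    rw [indicator_of_notMem hxS, mul_zero, zero_add, ENNReal.toReal_ofReal']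

theorem volume_restrict_Icc_zero_one_Iic (β : ℝ) :
    volume.restrict (Icc 0 1) (Iic β) = ENNReal.ofReal (min β 1) := by
  rw [Measure.restrict_apply measurableSet_Iic, inter_comm, ← Ici_inter_Iic, inter_assoc,
    Iic_inter_Iic, Ici_inter_Iic, Real.volume_Icc, sub_zero, min_comm]

theorem volume_restrict_Icc_zero_one_compl_Iic {β : ℝ} (hβ : 0 ≤ β) :
    volume.restrict (Icc 0 1) (Iic β)ᶜ = ENNReal.ofReal (1 - min β 1) := by
  rw [measure_compl measurableSet_Iic (measure_ne_top _ _), volume_restrict_Icc_zero_one_Iic,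
    Measure.restrict_apply_univ, Real.volume_Icc, sub_zero,
    ENNReal.ofReal_sub _ (le_min hβ zero_le_one)]

theorem map_Kt_toReal {t α : ℝ} (ht : t ∈ Ioc 0 1) (hα : α ∈ Icc 0 1)
    {S : Set ℝ} (hS₁ : Ico 0 α ⊆ S) (hS₂ : S ⊆ Icc 0 α) :
    (volume.restrict (Icc 0 1)).map (fun x => (Kt t x S).toReal)
      = ENNReal.ofReal (1 - min (α / t) 1) • Measure.dirac (max (α - t) 0)
        + ENNReal.ofReal (min (α / t) 1) • Measure.dirac (t + max (α - t) 0) := by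
  have hβ : 0 ≤ α / t := div_nonneg hα.1 ht.1.le
  rw [Measure.map_congr (Kt_toReal_ae_eq ht hα hS₁ hS₂), Measure.map_ite_const _ measurableSet_Iic,
    volume_restrict_Icc_zero_one_Iic, volume_restrict_Icc_zero_one_compl_Iic hβ, add_comm]

/-- For `t ∈ (0,1]` and the uniform distribution `P` on `[0,1]`, the pushforwards of
`x ↦ K(x,[0,α])` and `x ↦ K(x,[0,α))` under `P` coincide and equal the two-point measure
`(1 - min(α/t,1)) δ_{max(α-t,0)} + min(α/t,1) δ_{t + max(α-t,0)}`. -/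
theorem Kt_pushforward (t : ℝ) (ht : t ∈ Set.Ioc (0:ℝ) 1) (α : ℝ) (hα : α ∈ Set.Icc (0:ℝ) 1) :
    Measure.map (fun x => (Kt t x (Set.Icc 0 α)).toReal) (volume.restrict (Set.Icc (0:ℝ) 1))
      = Measure.map (fun x => (Kt t x (Set.Ico 0 α)).toReal)
          (volume.restrict (Set.Icc (0:ℝ) 1)) ∧
    Measure.map (fun x => (Kt t x (Set.Icc 0 α)).toReal) (volume.restrict (Set.Icc (0:ℝ) 1))
      = ENNReal.ofReal (1 - min (α / t) 1) • Measure.dirac (max (α - t) 0)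
        + ENNReal.ofReal (min (α / t) 1) • Measure.dirac (t + max (α - t) 0) := by
  have hIcc := map_Kt_toReal ht hα Ico_subset_Icc_self subset_rfl
  have hIco := map_Kt_toReal ht hα subset_rfl Ico_subset_Icc_self
  exact ⟨hIcc.trans hIco.symm, hIcc⟩
end
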